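/- Let G be a 4-Ore graph not isomorphic to K4. Then for every triangle T of G, the set V(G)∖V(T) contains either a collapsible subset of G or a nontrivial cocollapsible subset of G. -/

import Mathlib

open SimpleGraph

/-- The degree of a vertex, as the cardinality of its neighbor set. -/
noncomputable def deg {V : Type} (G : SimpleGraph V) (v : V) : ℕ :=
  Nat.card (G.neighborSet v)

/-- The number of edges of a graph. -/
noncomputable def numEdges {V : Type} (G : SimpleGraph V) : ℕ :=
  Nat.card G.edgeSet

/-- The independence number of a graph. -/
noncomputable def indepNum {V : Type} (G : SimpleGraph V) : ℕ :=
  sSup {n | ∃ s : Set V, (∀ u ∈ s, ∀ v ∈ s, ¬ G.Adj u v) ∧ s.ncard = n}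

/-- The set of vertices of degree at most three. -/
noncomputable def D3set {V : Type} (G : SimpleGraph V) : Set V :=
  {v | deg G v ≤ 3}

/-- `D3(G)`: the subgraph induced by the vertices of degree at most three. -/
noncomputable def D3 {V : Type} (G : SimpleGraph V) : SimpleGraph (D3set G) :=
  G.induce (D3set G)

/-- The potential of a graph: `p(G) = 4.8 |V(G)| - 3 |E(G)| + 0.6 α(D3(G))`. -/
noncomputable def potential {V : Type} (G : SimpleGraph V) : ℚ :=
  (24/5 : ℚ) * Nat.card V - 3 * numEdges G + (3/5 : ℚ) * _root_.indepNum (D3 G)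

/-- The potential of a subset `R` of the vertices of `G`:
`p(R) = 4.8 |R| - 3 |E(G[R])| + 0.6 α(G[D3(G) ∩ R])`. -/
noncomputable def potentialOf {V : Type} (G : SimpleGraph V) (R : Set V) : ℚ :=
  (24/5 : ℚ) * R.ncard - 3 * numEdges (G.induce R)
    + (3/5 : ℚ) * _root_.indepNum (G.induce (D3set G ∩ R))

/-- A graph is `k`-critical if it is not `(k-1)`-colorable but every proper
subgraph is `(k-1)`-colorable. -/
def IsKCritical {V : Type} (G : SimpleGraph V) (k : ℕ) : Prop :=
  ¬ G.Colorable (k - 1) ∧ ∀ H : SimpleGraph V, H ≤ G → H ≠ G → H.Colorable (k - 1)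

/-- A graph has Ore-degree at most `d` if `d(u) + d(v) ≤ d` for every edge `uv`. -/
def OreDegreeAtMost {V : Type} (G : SimpleGraph V) (d : ℕ) : Prop :=
  ∀ u v, G.Adj u v → deg G u + deg G v ≤ d

/-- The Ore-composition of `G1` (edge-side, with replaced edge `xy`) and `G2`
(split-side, with split vertex `z` whose incident edges going to `A` are attached
to `x` and the remaining ones to `y`). -/
def oreCompose {V1 V2 : Type} (G1 : SimpleGraph V1) (G2 : SimpleGraph V2)
    (x y : V1) (z : V2) (A : Set V2) :
    SimpleGraph (V1 ⊕ {v : V2 // v ≠ z}) :=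
  SimpleGraph.fromRel (fun a b =>
    match a, b with
    | Sum.inl u, Sum.inl v =>
        G1.Adj u v ∧ ¬((u = x ∧ v = y) ∨ (u = y ∧ v = x))
    | Sum.inl u, Sum.inr v =>
        (u = x ∧ G2.Adj z v.1 ∧ v.1 ∈ A) ∨ (u = y ∧ G2.Adj z v.1 ∧ v.1 ∉ A)
    | Sum.inr _, Sum.inl _ => False
    | Sum.inr u, Sum.inr v => G2.Adj u.1 v.1)

/-- `G` is an Ore-composition of `G1` and `G2`: there are a replaced edge `xy` of
`G1`, a split vertex `z` of `G2`, and a splitting of the edges at `z` into two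
nonempty parts, such that `G` is isomorphic to the resulting composition. -/
def IsOreComposition {V V1 V2 : Type} (G : SimpleGraph V)
    (G1 : SimpleGraph V1) (G2 : SimpleGraph V2) : Prop :=
  ∃ (x y : V1) (z : V2) (A : Set V2),
    G1.Adj x y ∧ (∃ p, G2.Adj z p ∧ p ∈ A) ∧ (∃ q, G2.Adj z q ∧ q ∉ A) ∧
    Nonempty (G ≃g oreCompose G1 G2 x y z A)

/-- The family of `4`-Ore graphs: the smallest family of graphs containing `K4`
and closed under Ore-compositions. -/
inductive IsFourOre : ∀ {V : Type}, SimpleGraph V → Prop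
  | k4 {V : Type} (G : SimpleGraph V) :
      Nonempty (G ≃g completeGraph (Fin 4)) → IsFourOre G
  | comp {V V1 V2 : Type} (G : SimpleGraph V)
      (G1 : SimpleGraph V1) (G2 : SimpleGraph V2) :
      IsFourOre G1 → IsFourOre G2 → IsOreComposition G G1 G2 → IsFourOre G

/-- The boundary of a set `R`: the vertices of `R` with a neighbor outside `R`. -/
def boundary {V : Type} (G : SimpleGraph V) (R : Set V) : Set V :=
  {v | v ∈ R ∧ ∃ u, u ∉ R ∧ G.Adj v u}

/-- A proper subset `R` of the vertices with `|R| ≥ 2` is collapsible if in every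
proper 3-coloring of `G[R]` all vertices of the boundary of `R` get the same color. -/
def Collapsible {V : Type} (G : SimpleGraph V) (R : Set V) : Prop :=
  R ≠ Set.univ ∧ 2 ≤ R.ncard ∧
  ∀ φ : V → Fin 3, (∀ u ∈ R, ∀ v ∈ R, G.Adj u v → φ u ≠ φ v) →
    ∀ u ∈ boundary G R, ∀ v ∈ boundary G R, φ u = φ v

/-- The critical complement of a set `R`: identify the boundary of `R` to a single
vertex (the vertex `none`) and delete the rest of `R`. -/
def criticalComplement {V : Type} (G : SimpleGraph V) (R : Set V) :
    SimpleGraph (Option {v : V // v ∉ R}) :=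
  SimpleGraph.fromRel (fun a b =>
    match a, b with
    | some u, some v => G.Adj u.1 v.1
    | some u, none => ∃ w ∈ boundary G R, G.Adj u.1 w
    | none, some _ => False
    | none, none => False)

/-- A nonempty proper subset `R` with boundary `S` is cocollapsible if every vertex
of `S` has exactly one neighbor outside `R`, and for every non-constant list of
forbidden colors on `S` there is a proper 3-coloring of `G[R]` avoiding them. -/
def Cocollapsible {V : Type} (G : SimpleGraph V) (R : Set V) : Prop :=
  R.Nonempty ∧ R ≠ Set.univ ∧
  (∀ v ∈ boundary G R, ∃! u, u ∉ R ∧ G.Adj v u) ∧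
  ∀ f : V → Fin 3,
    (∃ u ∈ boundary G R, ∃ v ∈ boundary G R, f u ≠ f v) →
    ∃ φ : V → Fin 3, (∀ u ∈ R, ∀ v ∈ R, G.Adj u v → φ u ≠ φ v) ∧
      ∀ v ∈ boundary G R, φ v ≠ f v

/-- A cocollapsible set is nontrivial if its complement has more than one vertex. -/
def NontrivialCocollapsible {V : Type} (G : SimpleGraph V) (R : Set V) : Prop :=
  Cocollapsible G R ∧ 1 < (Rᶜ : Set V).ncard

/-- The graph `H` together with the (possibly new) edge `uv`. -/
def withEdge {W : Type} (H : SimpleGraph W) (u v : W) : SimpleGraph W :=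
  H ⊔ SimpleGraph.fromEdgeSet {s(u, v)}

/-- A collapsible set `R` is tight if for any two distinct boundary vertices `u, v`
the graph `G[R] + uv` is `4`-critical. -/
def TightCollapsible {V : Type} (G : SimpleGraph V) (R : Set V) : Prop :=
  Collapsible G R ∧
  ∀ u (hu : u ∈ boundary G R) v (hv : v ∈ boundary G R), u ≠ v →
    IsKCritical (withEdge (G.induce R) ⟨u, hu.1⟩ ⟨v, hv.1⟩) 4

/-- `s(H) = |E(H)| - |V(H)| + α(H)`. -/
noncomputable def sVal {V : Type} (H : SimpleGraph V) : ℤ :=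
  (numEdges H : ℤ) - (Nat.card V : ℤ) + (_root_.indepNum H : ℤ)

/-- `H7`: the unique Ore-composition of two copies of `K4`. Vertices `0,1,2,3`
form the edge-side `K4` with replaced edge `01`; the split vertex of the second
`K4` on `{z,4,5,6}` is split so that `0` gets the edge to `4` and `1` gets the
edges to `5` and `6`. -/
def H7 : SimpleGraph (Fin 7) :=
  SimpleGraph.fromRel (fun a b =>
    ((a, b) : Fin 7 × Fin 7) ∈
      ([(0, 2), (0, 3), (1, 2), (1, 3), (2, 3), (4, 5), (4, 6), (5, 6),
        (0, 4), (1, 5), (1, 6)] : List (Fin 7 × Fin 7)))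

/-- A diamond in `G`: a subgraph isomorphic to `K4` minus an edge whose two
vertices of degree three within the subgraph (`w1` and `w2`) also have degree
three in `G`.  The vertices `e1` and `e2` are the ends of the diamond. -/
def IsDiamond {V : Type} (G : SimpleGraph V) (e1 e2 w1 w2 : V) : Prop :=
  e1 ≠ e2 ∧ e1 ≠ w1 ∧ e1 ≠ w2 ∧ e2 ≠ w1 ∧ e2 ≠ w2 ∧ w1 ≠ w2 ∧
  G.Adj w1 w2 ∧ G.Adj e1 w1 ∧ G.Adj e1 w2 ∧ G.Adj e2 w1 ∧ G.Adj e2 w2 ∧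
  deg G w1 = 3 ∧ deg G w2 = 3

/-- A triangle with a pendant edge. -/
def trianglePendant1 : SimpleGraph (Fin 4) :=
  SimpleGraph.fromRel (fun a b =>
    ((a, b) : Fin 4 × Fin 4) ∈ ([(0, 1), (1, 2), (2, 0), (0, 3)] : List (Fin 4 × Fin 4)))

/-- A triangle with a pendant path on two further vertices. -/
def trianglePendant2 : SimpleGraph (Fin 5) :=
  SimpleGraph.fromRel (fun a b =>
    ((a, b) : Fin 5 × Fin 5) ∈
      ([(0, 1), (1, 2), (2, 0), (0, 3), (3, 4)] : List (Fin 5 × Fin 5)))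

/-!
Induction along Ore-compositions: `G` is glued from the edge side `G1 - xy` and the split side
`G2 - z`. Besides not being 3-colorable, every 4-Ore graph has two coloring properties that
survive the composition: each edge `xy` can be deleted so that `x` and `y` get any prescribed
common color (`MonoEdgeColorable`), and after deleting a vertex `z`, any non-constant choice of
one forbidden color per neighbor of `z` can be avoided (`NbhdAvoidable`). Colorings of the two
sides glue as soon as every neighbor `b` of `z` avoids the color of the end of `xy` that inherits
the edge `zb`.

For a triangle `T`: if `T` lies on the edge side, the split side is cocollapsible (its boundary is
`N(z)`); if `T` lies on the split side, the edge side is collapsible (`x` and `y` get equal colors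
in every coloring of `G1 - xy`). No triangle has two vertices on the edge side and one on the
split side, so otherwise `T` is `x`, say, together with a triangle `zbc` of `G2`: we recurse into
`G2` and lift the set found there, unless `G2 = K4`, where the edge side without `x` is
cocollapsible because `z` then has a single neighbor attached to `y`.
-/

open Classical in
/-- The end of the replaced edge `xy` that takes over the edge `zb` of the split vertex. -/
noncomputable def oreSide {V1 V2 : Type} (x y : V1) (A : Set V2) (b : V2) : V1 :=
  if b ∈ A then x else y

open Classical in
/-- The vertex of an Ore-composition standing for `b`, where the split vertex `z` is sent to
the end `u` of the replaced edge. -/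
noncomputable def oreLift {V1 V2 : Type} (z : V2) (u : V1) (b : V2) : V1 ⊕ {v : V2 // v ≠ z} :=
  if h : b = z then Sum.inl u else Sum.inr ⟨b, h⟩

def IsProperColoring {V : Type} (G : SimpleGraph V) (φ : V → Fin 3) : Prop :=
  ∀ ⦃a b⦄, G.Adj a b → φ a ≠ φ b

section Coloring

variable {V W : Type} {G G' : SimpleGraph V} {φ : V → Fin 3}

lemma IsProperColoring.mono (h : G ≤ G') (hφ : IsProperColoring G' φ) :
    IsProperColoring G φ :=
  fun _ _ hab => hφ (h hab)

lemma IsProperColoring.comp {H : SimpleGraph W} {f : V → W} {ψ : W → Fin 3}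
    (hf : ∀ ⦃a b⦄, G.Adj a b → H.Adj (f a) (f b)) (hψ : IsProperColoring H ψ) :
    IsProperColoring G (ψ ∘ f) :=
  fun _ _ hab => hψ (hf hab)

lemma eq_of_isProperColoring_deleteEdges (hG : ¬ G.Colorable 3) {x y : V}
    (hφ : IsProperColoring (G.deleteEdges {s(x, y)}) φ) : φ x = φ y := by
  by_contra hne
  refine hG ⟨Coloring.mk φ fun {a b} hab => ?_⟩
  by_cases he : s(a, b) = s(x, y)
  · rcases Sym2.eq_iff.1 he with ⟨rfl, rfl⟩ | ⟨rfl, rfl⟩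
    exacts [hne, Ne.symm hne]
  · exact hφ (deleteEdges_adj.2 ⟨hab, he⟩)

lemma colorable_three_iff : G.Colorable 3 ↔ ∃ φ, IsProperColoring G φ :=
  ⟨fun ⟨C⟩ => ⟨C, fun _ _ h => C.valid h⟩,
    fun ⟨φ, hφ⟩ => ⟨Coloring.mk φ fun h => hφ h⟩⟩

end Coloring

section OreCompose

open Sum

variable {V1 V2 : Type} {G1 G1' : SimpleGraph V1} {G2 G2' : SimpleGraph V2}
  {x y : V1} {z : V2} {A : Set V2}

lemma oreSide_of_mem {b : V2} (hb : b ∈ A) : oreSide x y A b = x := if_pos hb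

lemma oreSide_of_notMem {b : V2} (hb : b ∉ A) : oreSide x y A b = y := if_neg hb

lemma oreSide_eq_or (b : V2) : oreSide x y A b = x ∨ oreSide x y A b = y := by
  unfold oreSide
  split_ifs
  exacts [Or.inl rfl, Or.inr rfl]

lemma oreSide_compl : oreSide y x Aᶜ = oreSide x y A := by
  ext b
  by_cases hb : b ∈ A <;> simp [oreSide, hb]

lemma oreCompose_adj_inl_inl {u v : V1} :
    (oreCompose G1 G2 x y z A).Adj (inl u) (inl v) ↔ (G1.deleteEdges {s(x, y)}).Adj u v := by
  simp only [oreCompose, fromRel_adj, deleteEdges_adj, Set.mem_singleton_iff, Sym2.eq_iff]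
  constructor
  · rintro ⟨-, h | ⟨h, h'⟩⟩
    · exact h
    · exact ⟨h.symm, by tauto⟩
  · exact fun h => ⟨fun huv => G1.irrefl (inl_injective huv ▸ h.1), Or.inl h⟩

lemma oreCompose_adj_inl_inr {u : V1} {v : {v : V2 // v ≠ z}} :
    (oreCompose G1 G2 x y z A).Adj (inl u) (inr v) ↔ G2.Adj z v ∧ u = oreSide x y A v := by
  by_cases hv : v.1 ∈ A <;>
    simp [oreCompose, oreSide, hv, and_comm]

lemma oreCompose_adj_inr_inr {u v : {v : V2 // v ≠ z}} :
    (oreCompose G1 G2 x y z A).Adj (inr u) (inr v) ↔ G2.Adj u v := by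
  simp only [oreCompose, fromRel_adj, ne_eq, inr.injEq, G2.adj_comm v u, or_self]
  exact ⟨And.right, fun h => ⟨fun huv => G2.irrefl (huv ▸ h), h⟩⟩

lemma oreCompose_comm : oreCompose G1 G2 x y z A = oreCompose G1 G2 y x z Aᶜ := by
  ext (u | u) (v | v)
  · simp only [oreCompose_adj_inl_inl, deleteEdges_adj, Sym2.eq_swap]
  · simp only [oreCompose_adj_inl_inr, oreSide_compl]
  · simp only [adj_comm _ (inr u), oreCompose_adj_inl_inr, oreSide_compl]
  · simp only [oreCompose_adj_inr_inr]

lemma oreCompose_adj_inr_iff {w : {v : V2 // v ≠ z}} {t : V1 ⊕ {v : V2 // v ≠ z}} :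
    (oreCompose G1 G2 x y z A).Adj (inr w) t ↔
      ∃ b, G2.Adj w b ∧ oreLift z (oreSide x y A w) b = t := by
  rcases t with u | v
  · rw [adj_comm, oreCompose_adj_inl_inr]
    constructor
    · rintro ⟨hzw, rfl⟩
      exact ⟨z, hzw.symm, dif_pos rfl⟩
    · rintro ⟨b, hwb, hb⟩
      by_cases hbz : b = z
      · subst hbz
        simp only [oreLift, dite_true, inl.injEq] at hb
        exact ⟨hwb.symm, hb.symm⟩
      · simp [oreLift, hbz] at hb
  · rw [oreCompose_adj_inr_inr]
    constructor
    · intro hwv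
      exact ⟨v, hwv, dif_neg v.2⟩
    · rintro ⟨b, hwb, hb⟩
      by_cases hbz : b = z
      · simp [oreLift, hbz] at hb
      · simp only [oreLift, hbz, dite_false, inr.injEq] at hb
        exact hb ▸ hwb

lemma oreCompose_adj_inl_iff_of_ne {w : V1} (hwx : w ≠ x) (hwy : w ≠ y)
    {t : V1 ⊕ {v : V2 // v ≠ z}} :
    (oreCompose G1 G2 x y z A).Adj (inl w) t ↔ ∃ a, G1.Adj w a ∧ inl a = t := by
  rcases t with a | v
  · simp only [oreCompose_adj_inl_inl, deleteEdges_adj, Set.mem_singleton_iff, Sym2.eq_iff,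
      inl.injEq, exists_eq_right]
    tauto
  · simp only [oreCompose_adj_inl_inr, reduceCtorEq, and_false, exists_false, iff_false,
      not_and]
    intro _ h
    unfold oreSide at h
    split_ifs at h <;> contradiction

lemma oreCompose_mono (h1 : G1 ≤ G1') (h2 : G2 ≤ G2') :
    oreCompose G1 G2 x y z A ≤ oreCompose G1' G2' x y z A := by
  rintro (u | u) (v | v) h
  · rw [oreCompose_adj_inl_inl] at h ⊢
    exact deleteEdges_mono h1 h
  · rw [oreCompose_adj_inl_inr] at h ⊢
    exact ⟨h2 h.1, h.2⟩
  · rw [adj_comm, oreCompose_adj_inl_inr] at h ⊢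
    exact ⟨h2 h.1, h.2⟩
  · rw [oreCompose_adj_inr_inr] at h ⊢
    exact h2 h

lemma oreLift_of_ne {u : V1} {b : V2} (hb : b ≠ z) : oreLift z u b = inr ⟨b, hb⟩ := dif_neg hb

lemma sumElim_oreLift {u : V1} {φ1 : V1 → Fin 3} {φ2 : V2 → Fin 3} (hu : φ1 u = φ2 z)
    (b : V2) :
    Sum.elim φ1 (φ2 ∘ Subtype.val) (oreLift z u b) = φ2 b := by
  unfold oreLift
  split_ifs with hb
  · exact hb ▸ hu
  · rfl

lemma isProperColoring_oreCompose {φ1 : V1 → Fin 3} {φ2 : V2 → Fin 3}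
    (h1 : IsProperColoring (G1.deleteEdges {s(x, y)}) φ1)
    (h2 : IsProperColoring (G2.deleteIncidenceSet z) φ2)
    (h12 : ∀ b, G2.Adj z b → φ2 b ≠ φ1 (oreSide x y A b)) :
    IsProperColoring (oreCompose G1 G2 x y z A) (Sum.elim φ1 (φ2 ∘ Subtype.val)) := by
  rintro (u | u) (v | v) h
  · exact h1 (oreCompose_adj_inl_inl.1 h)
  · obtain ⟨hzv, rfl⟩ := oreCompose_adj_inl_inr.1 h
    exact (h12 v hzv).symm
  · obtain ⟨hzu, rfl⟩ := oreCompose_adj_inl_inr.1 h.symm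
    exact h12 u hzu
  · exact h2 (deleteIncidenceSet_adj.2 ⟨oreCompose_adj_inr_inr.1 h, u.2, v.2⟩)

lemma deleteEdges_inl_le {u v : V1} :
    (oreCompose G1 G2 x y z A).deleteEdges {s(inl u, inl v)} ≤
      oreCompose (G1.deleteEdges {s(u, v)}) G2 x y z A := by
  rintro (a | a) (b | b) h <;> rw [deleteEdges_adj] at h
  · rw [oreCompose_adj_inl_inl] at h ⊢
    simp_all
  · exact h.1
  · exact h.1
  · exact h.1

lemma deleteEdges_oreLift_le {w : {v : V2 // v ≠ z}} {b : V2} :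
    (oreCompose G1 G2 x y z A).deleteEdges {s(oreLift z (oreSide x y A w) b, inr w)} ≤
      oreCompose G1 (G2.deleteEdges {s(b, w)}) x y z A := by
  have cross : ∀ a (c : {v : V2 // v ≠ z}), (oreCompose G1 G2 x y z A).Adj (inl a) (inr c) →
      s(inl a, inr c) ≠ s(oreLift z (oreSide x y A w) b, inr w) →
      (oreCompose G1 (G2.deleteEdges {s(b, w)}) x y z A).Adj (inl a) (inr c) := by
    intro a c h hne
    obtain ⟨hzc, rfl⟩ := oreCompose_adj_inl_inr.1 h
    refine oreCompose_adj_inl_inr.2 ⟨deleteEdges_adj.2 ⟨hzc, ?_⟩, rfl⟩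
    rintro hzcbw
    rcases Sym2.eq_iff.1 (Set.mem_singleton_iff.1 hzcbw) with ⟨rfl, hcw⟩ | ⟨hzw, -⟩
    · obtain rfl : c = w := Subtype.ext hcw
      exact hne (by simp [oreLift])
    · exact w.2 hzw.symm
  rintro (a | a) (c | c) h <;> rw [deleteEdges_adj, Set.mem_singleton_iff] at h
  · exact oreCompose_adj_inl_inl.2 (oreCompose_adj_inl_inl.1 h.1)
  · exact cross a c h.1 h.2
  · exact (cross c a h.1.symm (Sym2.eq_swap ▸ h.2)).symm
  · refine oreCompose_adj_inr_inr.2 (deleteEdges_adj.2 ⟨oreCompose_adj_inr_inr.1 h.1, ?_⟩)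
    rintro hcabw
    rcases Sym2.eq_iff.1 (Set.mem_singleton_iff.1 hcabw) with ⟨hcb, hcw⟩ | ⟨hcw, hab⟩
    · exact h.2 (by rw [← hcb, oreLift_of_ne a.2, ← Subtype.ext hcw])
    · exact h.2 (by rw [← hab, oreLift_of_ne c.2, ← Subtype.ext hcw, Sym2.eq_swap])

lemma deleteIncidenceSet_inr_le {v : {v : V2 // v ≠ z}} :
    (oreCompose G1 G2 x y z A).deleteIncidenceSet (inr v) ≤
      oreCompose G1 (G2.deleteIncidenceSet v) x y z A := by
  have hzv : z ≠ v := fun h => v.2 h.symm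
  rintro (a | a) (c | c) h <;> rw [deleteIncidenceSet_adj] at h
  · exact oreCompose_adj_inl_inl.2 (oreCompose_adj_inl_inl.1 h.1)
  · obtain ⟨hzc, rfl⟩ := oreCompose_adj_inl_inr.1 h.1
    exact oreCompose_adj_inl_inr.2 ⟨deleteIncidenceSet_adj.2
      ⟨hzc, hzv, fun hcv => h.2.2 (congrArg inr (Subtype.ext hcv))⟩, rfl⟩
  · obtain ⟨hza, rfl⟩ := oreCompose_adj_inl_inr.1 h.1.symm
    exact (oreCompose_adj_inl_inr.2 ⟨deleteIncidenceSet_adj.2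
      ⟨hza, hzv, fun hav => h.2.1 (congrArg inr (Subtype.ext hav))⟩, rfl⟩).symm
  · exact oreCompose_adj_inr_inr.2 (deleteIncidenceSet_adj.2 ⟨oreCompose_adj_inr_inr.1 h.1,
      fun hav => h.2.1 (congrArg inr (Subtype.ext hav)),
      fun hcv => h.2.2 (congrArg inr (Subtype.ext hcv))⟩)

lemma deleteIncidenceSet_inl_le {w : V1} :
    (oreCompose G1 G2 x y z A).deleteIncidenceSet (inl w) ≤
      oreCompose (G1.deleteIncidenceSet w)
        (G2.deleteEdges ((fun b => s(z, b)) '' {b | oreSide x y A b = w})) x y z A := by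
  have cross : ∀ a (c : {v : V2 // v ≠ z}), (oreCompose G1 G2 x y z A).Adj (inl a) (inr c) →
      a ≠ w → (oreCompose (G1.deleteIncidenceSet w)
        (G2.deleteEdges ((fun b => s(z, b)) '' {b | oreSide x y A b = w})) x y z A).Adj
          (inl a) (inr c) := by
    intro a c h haw
    obtain ⟨hzc, rfl⟩ := oreCompose_adj_inl_inr.1 h
    refine oreCompose_adj_inl_inr.2 ⟨deleteEdges_adj.2 ⟨hzc, ?_⟩, rfl⟩
    rintro ⟨b, hb, hbc⟩
    rcases Sym2.eq_iff.1 hbc with ⟨-, rfl⟩ | ⟨hzc', -⟩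
    · exact haw hb
    · exact c.2 hzc'.symm
  rintro (a | a) (c | c) h <;> rw [deleteIncidenceSet_adj] at h
  · rw [oreCompose_adj_inl_inl, deleteEdges_adj] at h ⊢
    exact ⟨deleteIncidenceSet_adj.2 ⟨h.1.1, fun haw => h.2.1 (by rw [haw]),
      fun hcw => h.2.2 (by rw [hcw])⟩, h.1.2⟩
  · exact cross a c h.1 fun haw => h.2.1 (by rw [haw])
  · exact (cross c a h.1.symm fun hcw => h.2.2 (by rw [hcw])).symm
  · refine oreCompose_adj_inr_inr.2 (deleteEdges_adj.2 ⟨oreCompose_adj_inr_inr.1 h.1, ?_⟩)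
    rintro ⟨b, -, hbac⟩
    rcases Sym2.eq_iff.1 hbac with ⟨hza, -⟩ | ⟨hzc, -⟩
    · exact a.2 hza.symm
    · exact c.2 hzc.symm

end OreCompose

def MonoEdgeColorable {V : Type} (G : SimpleGraph V) : Prop :=
  ∀ ⦃x y⦄, G.Adj x y → ∀ c : Fin 3,
    ∃ φ, IsProperColoring (G.deleteEdges {s(x, y)}) φ ∧ φ x = c ∧ φ y = c

def NbhdAvoidable {V : Type} (G : SimpleGraph V) : Prop :=
  ∀ z (f : V → Fin 3), (∃ u v, G.Adj z u ∧ G.Adj z v ∧ f u ≠ f v) →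
    ∃ φ, IsProperColoring (G.deleteIncidenceSet z) φ ∧ ∀ u, G.Adj z u → φ u ≠ f u

section Invariants

variable {V W : Type} {G : SimpleGraph V} {H : SimpleGraph W}

lemma not_colorable_of_iso (e : G ≃g H) (hH : ¬ H.Colorable 3) : ¬ G.Colorable 3 :=
  fun hG => hH (hG.of_hom e.symm.toHom)

lemma MonoEdgeColorable.of_iso (e : G ≃g H) (hH : MonoEdgeColorable H) :
    MonoEdgeColorable G := by
  intro x y hxy c
  obtain ⟨φ, hφ, hx, hy⟩ := hH (e.map_adj_iff.2 hxy) c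
  refine ⟨φ ∘ e, hφ.comp fun a b hab => ?_, hx, hy⟩
  simp only [deleteEdges_adj, Set.mem_singleton_iff, Sym2.eq_iff, e.map_adj_iff,
    EmbeddingLike.apply_eq_iff_eq] at hab ⊢
  exact hab

lemma NbhdAvoidable.of_iso (e : G ≃g H) (hH : NbhdAvoidable H) : NbhdAvoidable G := by
  rintro z f ⟨u, v, hu, hv, huv⟩
  obtain ⟨φ, hφ, havoid⟩ := hH (e z) (f ∘ e.symm)
    ⟨e u, e v, e.map_adj_iff.2 hu, e.map_adj_iff.2 hv, by simpa using huv⟩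
  refine ⟨φ ∘ e, hφ.comp fun a b hab => ?_,
    fun u hu => by simpa using havoid _ (e.map_adj_iff.2 hu)⟩
  simp only [deleteIncidenceSet_adj, e.map_adj_iff, ne_eq, EmbeddingLike.apply_eq_iff_eq] at hab ⊢
  exact hab

lemma not_colorable_completeGraph_fin_four : ¬ (completeGraph (Fin 4)).Colorable 3 :=
  fun h => by simpa using h.card_le_of_pairwise_adj id fun _ _ hij => hij

lemma monoEdgeColorable_completeGraph_fin_four : MonoEdgeColorable (completeGraph (Fin 4)) := by
  have key : ∀ x y : Fin 4, x ≠ y → ∀ c : Fin 3, ∃ φ : Fin 4 → Fin 3,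
      (∀ a b, a ≠ b → s(a, b) ≠ s(x, y) → φ a ≠ φ b) ∧ φ x = c ∧ φ y = c := by
    decide
  intro x y hxy c
  obtain ⟨φ, hφ, hx, hy⟩ := key x y hxy c
  exact ⟨φ, fun a b hab => hφ a b (deleteEdges_adj.1 hab).1 (deleteEdges_adj.1 hab).2, hx, hy⟩

set_option maxRecDepth 10000 in
lemma nbhdAvoidable_completeGraph_fin_four : NbhdAvoidable (completeGraph (Fin 4)) := by
  have key : ∀ (z : Fin 4) (f : Fin 4 → Fin 3),
      (∃ u v, z ≠ u ∧ z ≠ v ∧ f u ≠ f v) →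
      ∃ φ : Fin 4 → Fin 3, (∀ a b, a ≠ b → a ≠ z → b ≠ z → φ a ≠ φ b) ∧
        ∀ u, z ≠ u → φ u ≠ f u := by
    decide
  intro z f hf
  obtain ⟨φ, hφ, havoid⟩ := key z f hf
  refine ⟨φ, fun a b hab => ?_, havoid⟩
  obtain ⟨hab, haz, hbz⟩ := deleteIncidenceSet_adj.1 hab
  exact hφ a b hab haz hbz

lemma exists_adj_ne_of_not_colorable (hG : ¬ G.Colorable 3) (hC : MonoEdgeColorable G)
    {x y : V} (hxy : G.Adj x y) : ∃ u, G.Adj x u ∧ u ≠ y := by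
  classical
  by_contra! hx
  obtain ⟨φ, hφ, -, hy⟩ := hC hxy 0
  refine hG (colorable_three_iff.2 ⟨Function.update φ x 1, fun a b hab => ?_⟩)
  have hyx : y ≠ x := hxy.ne.symm
  by_cases hax : a = x
  · subst hax
    obtain rfl := hx b hab
    simp [hyx, hy]
  by_cases hbx : b = x
  · subst hbx
    obtain rfl := hx a hab.symm
    simp [hyx, hy]
  simp only [Function.update_of_ne hax, Function.update_of_ne hbx]
  refine hφ (deleteEdges_adj.2 ⟨hab, ?_⟩)
  simp [hax, hbx]

end Invariants

section OreStep

open Sum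

variable {V1 V2 : Type} {G1 : SimpleGraph V1} {G2 : SimpleGraph V2} {x y : V1} {z : V2}
  {A : Set V2} {p q : V2}

lemma not_colorable_oreCompose (h1 : ¬ G1.Colorable 3) (h2 : ¬ G2.Colorable 3) :
    ¬ (oreCompose G1 G2 x y z A).Colorable 3 := by
  rw [colorable_three_iff]
  rintro ⟨φ, hφ⟩
  have hxy : φ (inl x) = φ (inl y) :=
    eq_of_isProperColoring_deleteEdges h1 (hφ.comp fun _ _ => oreCompose_adj_inl_inl.2)
  have hlift : ∀ (w : {v // v ≠ z}) b,
      φ (oreLift z (oreSide x y A w) b) = φ (oreLift z x b) := by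
    intro w b
    unfold oreLift oreSide
    split_ifs <;> simp_all
  have key : ∀ (w : {v // v ≠ z}) b, G2.Adj w b → φ (inr w) ≠ φ (oreLift z x b) :=
    fun w b hwb => hlift w b ▸ hφ (oreCompose_adj_inr_iff.2 ⟨b, hwb, rfl⟩)
  refine h2 (colorable_three_iff.2 ⟨φ ∘ oreLift z x, fun a b hab => ?_⟩)
  by_cases ha : a = z
  · subst ha
    have hb : b ≠ a := hab.ne.symm
    simpa [oreLift_of_ne hb] using (key ⟨b, hb⟩ a hab.symm).symm
  · simpa [oreLift_of_ne ha] using key ⟨a, ha⟩ b hab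

lemma exists_isProperColoring_oreCompose_of_ne (hL2 : NbhdAvoidable G2) (hzp : G2.Adj z p)
    (hpA : p ∈ A) (hzq : G2.Adj z q) (hqA : q ∉ A) {φ1 : V1 → Fin 3}
    (h1 : IsProperColoring (G1.deleteEdges {s(x, y)}) φ1) (hne : φ1 x ≠ φ1 y) :
    ∃ φ2 : V2 → Fin 3,
      IsProperColoring (oreCompose G1 G2 x y z A) (Sum.elim φ1 (φ2 ∘ Subtype.val)) := by
  obtain ⟨φ2, h2, havoid⟩ := hL2 z (φ1 ∘ oreSide x y A)
    ⟨p, q, hzp, hzq, by simpa [oreSide_of_mem hpA, oreSide_of_notMem hqA] using hne⟩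
  exact ⟨φ2, isProperColoring_oreCompose h1 h2 havoid⟩

lemma exists_isProperColoring_oreCompose_of_split (hC1 : MonoEdgeColorable G1)
    (hxy : G1.Adj x y) {φ2 : V2 → Fin 3} (h2 : IsProperColoring G2 φ2) :
    ∃ φ1 : V1 → Fin 3,
      IsProperColoring (oreCompose G1 G2 x y z A) (Sum.elim φ1 (φ2 ∘ Subtype.val)) ∧
        ∀ b, φ1 (oreSide x y A b) = φ2 z := by
  obtain ⟨φ1, h1, hx, hy⟩ := hC1 hxy (φ2 z)
  have hside : ∀ b, φ1 (oreSide x y A b) = φ2 z := by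
    intro b
    unfold oreSide
    split_ifs
    exacts [hx, hy]
  refine ⟨φ1, isProperColoring_oreCompose h1 (h2.mono (deleteIncidenceSet_le _ _)) ?_, hside⟩
  exact fun b hzb => hside b ▸ (h2 hzb).symm

lemma monoEdgeColorable_oreCompose (hxy : G1.Adj x y) (hC1 : MonoEdgeColorable G1)
    (hC2 : MonoEdgeColorable G2) (hL2 : NbhdAvoidable G2) (hzp : G2.Adj z p) (hpA : p ∈ A)
    (hzq : G2.Adj z q) (hqA : q ∉ A) : MonoEdgeColorable (oreCompose G1 G2 x y z A) := by
  have hinr : ∀ t w, (oreCompose G1 G2 x y z A).Adj t (inr w) → ∀ c : Fin 3, ∃ φ,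
      IsProperColoring ((oreCompose G1 G2 x y z A).deleteEdges {s(t, inr w)}) φ ∧
        φ t = c ∧ φ (inr w) = c := by
    intro t w ht c
    obtain ⟨b, hwb, rfl⟩ := oreCompose_adj_inr_iff.1 ht.symm
    obtain ⟨φ2, h2, hb, hw⟩ := hC2 hwb.symm c
    obtain ⟨φ1, h, hside⟩ :=
      exists_isProperColoring_oreCompose_of_split (z := z) (A := A) hC1 hxy h2
    exact ⟨_, h.mono deleteEdges_oreLift_le, (sumElim_oreLift (hside w) b).trans hb, hw⟩
  rintro (u | u) (v | v) huv c
  · obtain ⟨huv, hne⟩ := deleteEdges_adj.1 (oreCompose_adj_inl_inl.1 huv)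
    obtain ⟨φ1, h1, hu, hv⟩ := hC1 huv c
    have hxy' : (G1.deleteEdges {s(u, v)}).Adj x y :=
      deleteEdges_adj.2 ⟨hxy, fun h => hne (by simp_all [eq_comm])⟩
    obtain ⟨φ2, h⟩ := exists_isProperColoring_oreCompose_of_ne hL2 hzp hpA hzq hqA
      (h1.mono (deleteEdges_le _)) (h1 hxy')
    exact ⟨_, h.mono deleteEdges_inl_le, hu, hv⟩
  · exact hinr _ _ huv c
  · obtain ⟨φ, hφ, hv, hu⟩ := hinr _ _ huv.symm c
    exact ⟨φ, by rwa [Sym2.eq_swap], hu, hv⟩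
  · exact hinr _ _ huv c

lemma exists_avoiding_oreCompose_inr (hxy : G1.Adj x y) (hC1 : MonoEdgeColorable G1)
    (hL2 : NbhdAvoidable G2) (v : {v : V2 // v ≠ z}) (f : V1 ⊕ {v : V2 // v ≠ z} → Fin 3)
    (hf : ∃ t t', (oreCompose G1 G2 x y z A).Adj (inr v) t ∧
      (oreCompose G1 G2 x y z A).Adj (inr v) t' ∧ f t ≠ f t') :
    ∃ φ, IsProperColoring ((oreCompose G1 G2 x y z A).deleteIncidenceSet (inr v)) φ ∧
      ∀ t, (oreCompose G1 G2 x y z A).Adj (inr v) t → φ t ≠ f t := by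
  obtain ⟨_, _, ht, ht', hne⟩ := hf
  obtain ⟨b, hb, rfl⟩ := oreCompose_adj_inr_iff.1 ht
  obtain ⟨b', hb', rfl⟩ := oreCompose_adj_inr_iff.1 ht'
  obtain ⟨φ2, h2, havoid⟩ :=
    hL2 v (f ∘ oreLift z (oreSide x y A v)) ⟨b, b', hb, hb', hne⟩
  obtain ⟨φ1, h, hside⟩ := exists_isProperColoring_oreCompose_of_split (A := A) hC1 hxy h2
  refine ⟨_, h.mono deleteIncidenceSet_inr_le, fun t ht => ?_⟩
  obtain ⟨b, hb, rfl⟩ := oreCompose_adj_inr_iff.1 ht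
  rw [sumElim_oreLift (hside v)]
  exact havoid b hb

lemma exists_avoiding_oreCompose_inl_of_ne (hxy : G1.Adj x y) (hL1 : NbhdAvoidable G1)
    (hL2 : NbhdAvoidable G2) (hzp : G2.Adj z p) (hpA : p ∈ A) (hzq : G2.Adj z q)
    (hqA : q ∉ A) {w : V1} (hwx : w ≠ x) (hwy : w ≠ y)
    (f : V1 ⊕ {v : V2 // v ≠ z} → Fin 3)
    (hf : ∃ t t', (oreCompose G1 G2 x y z A).Adj (inl w) t ∧
      (oreCompose G1 G2 x y z A).Adj (inl w) t' ∧ f t ≠ f t') :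
    ∃ φ, IsProperColoring ((oreCompose G1 G2 x y z A).deleteIncidenceSet (inl w)) φ ∧
      ∀ t, (oreCompose G1 G2 x y z A).Adj (inl w) t → φ t ≠ f t := by
  obtain ⟨_, _, ht, ht', hne⟩ := hf
  obtain ⟨a, ha, rfl⟩ := (oreCompose_adj_inl_iff_of_ne hwx hwy).1 ht
  obtain ⟨a', ha', rfl⟩ := (oreCompose_adj_inl_iff_of_ne hwx hwy).1 ht'
  obtain ⟨φ1, h1, havoid⟩ := hL1 w (f ∘ inl) ⟨a, a', ha, ha', hne⟩
  have hxy' : (G1.deleteIncidenceSet w).Adj x y :=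
    deleteIncidenceSet_adj.2 ⟨hxy, Ne.symm hwx, Ne.symm hwy⟩
  obtain ⟨φ2, h⟩ := exists_isProperColoring_oreCompose_of_ne hL2 hzp hpA hzq hqA
    (h1.mono (deleteEdges_le _)) (h1 hxy')
  refine ⟨_, (h.mono (oreCompose_mono le_rfl (deleteEdges_le _))).mono deleteIncidenceSet_inl_le,
    fun t ht => ?_⟩
  obtain ⟨a, ha, rfl⟩ := (oreCompose_adj_inl_iff_of_ne hwx hwy).1 ht
  exact havoid a ha

lemma exists_avoiding_oreCompose_inl_left_of_list (hxy : G1.Adj x y) (hL1 : NbhdAvoidable G1)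
    (hL2 : NbhdAvoidable G2) (hzp : G2.Adj z p) (hpA : p ∈ A) (hzq : G2.Adj z q)
    (hqA : q ∉ A) (f : V1 ⊕ {v : V2 // v ≠ z} → Fin 3) (f1 : V1 → Fin 3)
    (hf1 : ∀ a, a ≠ y → f1 a = f (inl a))
    (hf1nc : ∃ a a', G1.Adj x a ∧ G1.Adj x a' ∧ f1 a ≠ f1 a')
    (hsplit : f1 y = f (oreLift z x p) ∨ ∃ b b', G2.Adj z b ∧ b ∈ A ∧ G2.Adj z b' ∧ b' ∈ A ∧
      f (oreLift z x b) ≠ f (oreLift z x b')) :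
    ∃ φ, IsProperColoring ((oreCompose G1 G2 x y z A).deleteIncidenceSet (inl x)) φ ∧
      ∀ t, (oreCompose G1 G2 x y z A).Adj (inl x) t → φ t ≠ f t := by
  classical
  obtain ⟨φ1, h1, hav1⟩ := hL1 x f1 hf1nc
  let g : V2 → Fin 3 := fun b => if b ∈ A then f (oreLift z x b) else φ1 y
  have hg : ∃ b b', G2.Adj z b ∧ G2.Adj z b' ∧ g b ≠ g b' := by
    rcases hsplit with h | ⟨b, b', hb, hbA, hb', hb'A, hne⟩
    · refine ⟨p, q, hzp, hzq, ?_⟩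
      simpa [g, hpA, hqA, ← h] using (hav1 y hxy).symm
    · exact ⟨b, b', hb, hb', by simpa [g, hbA, hb'A] using hne⟩
  obtain ⟨φ2, h2, hav2⟩ := hL2 z g hg
  have h : IsProperColoring (oreCompose (G1.deleteIncidenceSet x)
      (G2.deleteEdges ((fun b => s(z, b)) '' {b | oreSide x y A b = x})) x y z A)
      (Sum.elim φ1 (φ2 ∘ Subtype.val)) := by
    refine isProperColoring_oreCompose (h1.mono (deleteEdges_le _)) (h2.mono fun a b hab => ?_)
      fun b hb => ?_
    · simp only [deleteIncidenceSet_adj, deleteEdges_adj] at hab ⊢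
      exact ⟨hab.1.1, hab.2⟩
    · obtain ⟨hzb, hbZ⟩ := deleteEdges_adj.1 hb
      have hbA : b ∉ A := fun hbA => hbZ ⟨b, oreSide_of_mem hbA, rfl⟩
      simpa [oreSide_of_notMem hbA, g, hbA] using hav2 b hzb
  refine ⟨_, h.mono deleteIncidenceSet_inl_le, ?_⟩
  rintro (a | b) ht
  · obtain ⟨hxa, hne⟩ := deleteEdges_adj.1 (oreCompose_adj_inl_inl.1 ht)
    have hay : a ≠ y := by
      rintro rfl
      exact hne rfl
    simpa [hf1 a hay] using hav1 a hxa
  · obtain ⟨hzb, hside⟩ := oreCompose_adj_inl_inr.1 ht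
    have hbA : b.1 ∈ A := by
      by_contra hbA
      exact hxy.ne (hside.trans (oreSide_of_notMem hbA))
    simpa [g, hbA, oreLift_of_ne b.2] using hav2 b hzb

lemma exists_avoiding_oreCompose_inl_left (hxy : G1.Adj x y) (hx : ∃ u, G1.Adj x u ∧ u ≠ y)
    (hL1 : NbhdAvoidable G1) (hL2 : NbhdAvoidable G2) (hzp : G2.Adj z p) (hpA : p ∈ A)
    (hzq : G2.Adj z q) (hqA : q ∉ A) (f : V1 ⊕ {v : V2 // v ≠ z} → Fin 3)
    (hf : ∃ t t', (oreCompose G1 G2 x y z A).Adj (inl x) t ∧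
      (oreCompose G1 G2 x y z A).Adj (inl x) t' ∧ f t ≠ f t') :
    ∃ φ, IsProperColoring ((oreCompose G1 G2 x y z A).deleteIncidenceSet (inl x)) φ ∧
      ∀ t, (oreCompose G1 G2 x y z A).Adj (inl x) t → φ t ≠ f t := by
  classical
  have hf1 : ∀ c : Fin 3, ∀ a, a ≠ y → Function.update (f ∘ inl) y c a = f (inl a) :=
    fun c a hay => Function.update_of_ne hay _ _
  -- `y` is not a neighbor of `x` in `G`, so the color forbidden at `y` in `G1` is ours to choose:
  -- the constant value of `f` on the neighbors of `z` attached to `x` if there is one, and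
  -- otherwise any color making the list at `x` non-constant.
  by_cases hconst : ∀ b, G2.Adj z b → b ∈ A → f (oreLift z x b) = f (oreLift z x p)
  · set c := f (oreLift z x p)
    have hnbr : ∀ t, (oreCompose G1 G2 x y z A).Adj (inl x) t → f t ≠ c →
        ∃ a, G1.Adj x a ∧ a ≠ y ∧ inl a = t := by
      rintro (a | b) ht hfc
      · obtain ⟨hxa, hne⟩ := deleteEdges_adj.1 (oreCompose_adj_inl_inl.1 ht)
        exact ⟨a, hxa, by rintro rfl; exact hne rfl, rfl⟩
      · obtain ⟨hzb, hside⟩ := oreCompose_adj_inl_inr.1 ht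
        have hbA : b.1 ∈ A := by
          by_contra hbA
          exact hxy.ne (hside.trans (oreSide_of_notMem hbA))
        exact absurd (by simpa [oreLift_of_ne b.2] using hconst b hzb hbA) hfc
    obtain ⟨s, hs, hsc⟩ : ∃ s, (oreCompose G1 G2 x y z A).Adj (inl x) s ∧ f s ≠ c := by
      obtain ⟨t, t', ht, ht', hne⟩ := hf
      by_cases htc : f t = c
      · exact ⟨t', ht', fun h => hne (htc.trans h.symm)⟩
      · exact ⟨t, ht, htc⟩
    obtain ⟨a, hxa, hay, rfl⟩ := hnbr s hs hsc
    refine exists_avoiding_oreCompose_inl_left_of_list hxy hL1 hL2 hzp hpA hzq hqA f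
      (Function.update (f ∘ inl) y c) (hf1 c) ⟨a, y, hxa, hxy, ?_⟩ (Or.inl (by simp [c]))
    simpa [hay] using hsc
  · push Not at hconst
    obtain ⟨b, hzb, hbA, hne⟩ := hconst
    obtain ⟨u, hxu, huy⟩ := hx
    have hsucc : ∀ c : Fin 3, c ≠ c + 1 := by decide
    refine exists_avoiding_oreCompose_inl_left_of_list hxy hL1 hL2 hzp hpA hzq hqA f
      (Function.update (f ∘ inl) y (f (inl u) + 1)) (hf1 _) ⟨u, y, hxu, hxy, ?_⟩
      (Or.inr ⟨b, p, hzb, hbA, hzp, hpA, hne⟩)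
    simp [huy, hsucc]

lemma nbhdAvoidable_oreCompose (hxy : G1.Adj x y) (h1 : ¬ G1.Colorable 3)
    (hC1 : MonoEdgeColorable G1) (hL1 : NbhdAvoidable G1) (hL2 : NbhdAvoidable G2)
    (hzp : G2.Adj z p) (hpA : p ∈ A) (hzq : G2.Adj z q) (hqA : q ∉ A) :
    NbhdAvoidable (oreCompose G1 G2 x y z A) := by
  rintro (w | v) f hf
  · by_cases hwx : w = x
    · subst hwx
      exact exists_avoiding_oreCompose_inl_left hxy (exists_adj_ne_of_not_colorable h1 hC1 hxy)
        hL1 hL2 hzp hpA hzq hqA f hf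
    by_cases hwy : w = y
    · subst hwy
      rw [oreCompose_comm] at hf ⊢
      exact exists_avoiding_oreCompose_inl_left hxy.symm
        (exists_adj_ne_of_not_colorable h1 hC1 hxy.symm) hL1 hL2 hzq hqA hzp (not_not.2 hpA) f hf
    exact exists_avoiding_oreCompose_inl_of_ne hxy hL1 hL2 hzp hpA hzq hqA hwx hwy f hf
  · exact exists_avoiding_oreCompose_inr hxy hC1 hL2 v f hf

end OreStep

section FourOre

variable {V : Type} {G : SimpleGraph V}

theorem IsFourOre.finite (h : IsFourOre G) : Finite V := by
  induction h with
  | k4 G hiso => exact Finite.of_equiv _ hiso.some.symm.toEquiv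
  | comp G G1 G2 _ _ hcomp ih1 ih2 =>
    obtain ⟨x, y, z, A, -, -, -, ⟨e⟩⟩ := hcomp
    exact Finite.of_equiv _ e.symm.toEquiv

theorem IsFourOre.colorInvariants (h : IsFourOre G) :
    ¬ G.Colorable 3 ∧ MonoEdgeColorable G ∧ NbhdAvoidable G := by
  induction h with
  | k4 G hiso =>
    obtain ⟨e⟩ := hiso
    exact ⟨not_colorable_of_iso e not_colorable_completeGraph_fin_four,
      .of_iso e monoEdgeColorable_completeGraph_fin_four,
      .of_iso e nbhdAvoidable_completeGraph_fin_four⟩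
  | comp G G1 G2 _ _ hcomp ih1 ih2 =>
    obtain ⟨hN1, hC1, hL1⟩ := ih1
    obtain ⟨hN2, hC2, hL2⟩ := ih2
    obtain ⟨x, y, z, A, hxy, ⟨p, hzp, hpA⟩, ⟨q, hzq, hqA⟩, ⟨e⟩⟩ := hcomp
    exact ⟨not_colorable_of_iso e (not_colorable_oreCompose hN1 hN2),
      .of_iso e (monoEdgeColorable_oreCompose hxy hC1 hC2 hL2 hzp hpA hzq hqA),
      .of_iso e (nbhdAvoidable_oreCompose hxy hN1 hC1 hL1 hL2 hzp hpA hzq hqA)⟩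

end FourOre

def HasReducibleSetOutside {V : Type} (G : SimpleGraph V) (T : Set V) : Prop :=
  ∃ R, R ⊆ Tᶜ ∧ (Collapsible G R ∨ NontrivialCocollapsible G R)

lemma HasReducibleSetOutside.mono {V : Type} {G : SimpleGraph V} {T T' : Set V} (hT : T' ⊆ T)
    (h : HasReducibleSetOutside G T) : HasReducibleSetOutside G T' := by
  obtain ⟨R, hR, hred⟩ := h
  exact ⟨R, hR.trans (Set.compl_subset_compl.2 hT), hred⟩

section Transport

variable {V W : Type} {G : SimpleGraph V} {H : SimpleGraph W} (e : G ≃g H)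

lemma boundary_preimage (S : Set W) : boundary G (e ⁻¹' S) = e ⁻¹' boundary H S := by
  ext v
  simp only [boundary, Set.mem_ofPred_eq, Set.mem_preimage, e.surjective.exists, e.map_adj_iff]

lemma preimage_ne_univ {S : Set W} (hS : S ≠ Set.univ) : e ⁻¹' S ≠ Set.univ :=
  fun h => hS (Set.preimage_injective.2 e.surjective (h.trans Set.preimage_univ.symm))

lemma ncard_preimage (S : Set W) : (e ⁻¹' S).ncard = S.ncard :=
  Set.ncard_preimage_of_injective_subset_range e.injective (by simp [e.surjective.range_eq])

lemma Collapsible.preimage {S : Set W} (h : Collapsible H S) : Collapsible G (e ⁻¹' S) := by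
  obtain ⟨hne, hcard, hcol⟩ := h
  refine ⟨preimage_ne_univ e hne, (ncard_preimage e S).symm ▸ hcard,
    fun φ hφ u hu v hv => ?_⟩
  rw [boundary_preimage] at hu hv
  simpa using hcol (φ ∘ e.symm) (fun a ha b hb hab => hφ _ (by simpa using ha) _
    (by simpa using hb) (e.symm.map_adj_iff.2 hab)) _ hu _ hv

lemma NontrivialCocollapsible.preimage {S : Set W} (h : NontrivialCocollapsible H S) :
    NontrivialCocollapsible G (e ⁻¹' S) := by
  obtain ⟨⟨⟨w, hw⟩, hne, huniq, hcol⟩, hcard⟩ := h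
  refine ⟨⟨⟨e.symm w, by simpa using hw⟩, preimage_ne_univ e hne, fun v hv => ?_,
    fun f ⟨u, hu, v, hv, huv⟩ => ?_⟩, by rwa [← Set.preimage_compl, ncard_preimage]⟩
  · rw [boundary_preimage] at hv
    exact (e.toEquiv.existsUnique_congr fun u => by simp [e.map_adj_iff]).2 (huniq _ hv)
  · rw [boundary_preimage] at hu hv
    obtain ⟨ψ, hψ, havoid⟩ := hcol (f ∘ e.symm) ⟨_, hu, _, hv, by simpa using huv⟩
    refine ⟨ψ ∘ e, fun a ha b hb hab => hψ _ ha _ hb (e.map_adj_iff.2 hab), fun v hv => ?_⟩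
    rw [boundary_preimage] at hv
    simpa using havoid _ hv

lemma HasReducibleSetOutside.preimage {T : Set W} (h : HasReducibleSetOutside H T) :
    HasReducibleSetOutside G (e ⁻¹' T) := by
  obtain ⟨R, hR, hred⟩ := h
  exact ⟨e ⁻¹' R, fun v hv => hR hv, hred.imp (Collapsible.preimage e)
    (NontrivialCocollapsible.preimage e)⟩

end Transport

lemma eq_of_ne_of_card_eq_four {α : Type} [Finite α] (h : Nat.card α = 4) {a b c u v : α}
    (hab : a ≠ b) (hac : a ≠ c) (hbc : b ≠ c) (hu : u ≠ a ∧ u ≠ b ∧ u ≠ c)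
    (hv : v ≠ a ∧ v ≠ b ∧ v ≠ c) : u = v := by
  classical
  have := Fintype.ofFinite α
  obtain ⟨hua, hub, huc⟩ := hu
  obtain ⟨hva, hvb, hvc⟩ := hv
  by_contra huv
  have h5 : ({u, v, a, b, c} : Finset α).card = 5 := by
    simp [Finset.card_insert_of_notMem, *]
  have := Finset.card_le_univ ({u, v, a, b, c} : Finset α)
  rw [h5, Fintype.card_eq_nat_card, h] at this
  omega

lemma NbhdAvoidable.cocollapsible_compl_singleton {V : Type} {G : SimpleGraph V}
    (hL : NbhdAvoidable G) {z p : V} (hzp : G.Adj z p) : Cocollapsible G {z}ᶜ := by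
  have hbd : boundary G {z}ᶜ = {v | G.Adj z v} := by
    ext v
    simp only [boundary, Set.mem_compl_iff, Set.mem_singleton_iff, not_not, exists_eq_left,
      Set.mem_ofPred_eq]
    exact ⟨fun h => h.2.symm, fun h => ⟨h.ne.symm, h.symm⟩⟩
  refine ⟨⟨p, hzp.ne.symm⟩, fun h => (h ▸ Set.mem_univ z : z ∈ ({z}ᶜ : Set V)) rfl,
    fun v hv => ?_, fun f ⟨u, hu, v, hv, huv⟩ => ?_⟩
  · rw [hbd] at hv
    exact ⟨z, ⟨not_not.2 rfl, hv.symm⟩, fun u hu => not_not.1 hu.1⟩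
  · rw [hbd] at hu hv
    obtain ⟨φ, hφ, havoid⟩ := hL z f ⟨u, v, hu, hv, huv⟩
    refine ⟨φ, fun a ha b hb hab => hφ (deleteIncidenceSet_adj.2 ⟨hab, ha, hb⟩), ?_⟩
    rw [hbd]
    exact havoid

section OreReducible

open Sum

variable {V1 V2 : Type} {G1 : SimpleGraph V1} {G2 : SimpleGraph V2} {x y : V1} {z : V2}
  {A : Set V2} {p q : V2} {R : Set V2}

lemma oreLift_mem_image_inr (hz : z ∉ R) {u : V1} {b : V2} :
    oreLift z u b ∈ inr '' (Subtype.val ⁻¹' R : Set {v : V2 // v ≠ z}) ↔ b ∈ R := by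
  by_cases hb : b = z
  · subst hb
    simp [oreLift, hz]
  · simp [oreLift_of_ne hb]

lemma boundary_oreCompose_image_inr (hz : z ∉ R) :
    boundary (oreCompose G1 G2 x y z A) (inr '' (Subtype.val ⁻¹' R)) =
      inr '' (Subtype.val ⁻¹' boundary G2 R) := by
  ext (a | b)
  · simp [boundary]
  · simp only [boundary, Set.mem_ofPred_eq, inr_injective.mem_set_image, Set.mem_preimage,
      oreCompose_adj_inr_iff]
    constructor
    · rintro ⟨hbR, _, ht, u, hbu, rfl⟩
      exact ⟨hbR, u, (oreLift_mem_image_inr hz).not.1 ht, hbu⟩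
    · rintro ⟨hbR, u, huR, hbu⟩
      exact ⟨hbR, _, (oreLift_mem_image_inr hz).not.2 huR, u, hbu, rfl⟩

lemma ncard_image_inr (hz : z ∉ R) :
    (inr '' (Subtype.val ⁻¹' R) : Set (V1 ⊕ {v : V2 // v ≠ z})).ncard = R.ncard := by
  rw [Set.ncard_image_of_injective _ inr_injective,
    Set.ncard_preimage_of_injective_subset_range Subtype.val_injective]
  exact fun b hb => ⟨⟨b, fun h => hz (h ▸ hb)⟩, rfl⟩

lemma Collapsible.image_inr (hz : z ∉ R) (h : Collapsible G2 R) :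
    Collapsible (oreCompose G1 G2 x y z A) (inr '' (Subtype.val ⁻¹' R)) := by
  obtain ⟨-, hcard, hcol⟩ := h
  refine ⟨(Set.ne_univ_iff_exists_notMem _).2 ⟨inl x, by simp⟩,
    (ncard_image_inr hz).symm ▸ hcard, fun φ hφ u hu v hv => ?_⟩
  rw [boundary_oreCompose_image_inr hz] at hu hv
  obtain ⟨b, hb, rfl⟩ := hu
  obtain ⟨c, hc, rfl⟩ := hv
  have hψ : ∀ a ∈ R, ∀ b ∈ R, G2.Adj a b →
      (φ ∘ oreLift z x) a ≠ (φ ∘ oreLift z x) b := by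
    intro a ha b hb hab
    have hne : ∀ c ∈ R, c ≠ z := fun c hc h => hz (h ▸ hc)
    simp only [Function.comp, oreLift_of_ne (hne a ha), oreLift_of_ne (hne b hb)]
    exact hφ _ ⟨_, ha, rfl⟩ _ ⟨_, hb, rfl⟩ (oreCompose_adj_inr_inr.2 hab)
  simpa [oreLift_of_ne b.2, oreLift_of_ne c.2] using hcol _ hψ _ hb _ hc

lemma Cocollapsible.nontrivial_image_inr [Finite V1] [Finite V2] (hxy : x ≠ y) (hz : z ∉ R)
    (h : Cocollapsible G2 R) :
    NontrivialCocollapsible (oreCompose G1 G2 x y z A) (inr '' (Subtype.val ⁻¹' R)) := by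
  obtain ⟨⟨r, hr⟩, -, huniq, hcol⟩ := h
  refine ⟨⟨⟨inr ⟨r, fun h => hz (h ▸ hr)⟩, ⟨_, hr, rfl⟩⟩,
    (Set.ne_univ_iff_exists_notMem _).2 ⟨inl x, by simp⟩, ?_, ?_⟩, ?_⟩
  · rw [boundary_oreCompose_image_inr hz]
    rintro _ ⟨b, hb, rfl⟩
    obtain ⟨u, ⟨huR, hbu⟩, hu⟩ := huniq b hb
    refine ⟨oreLift z (oreSide x y A b) u,
      ⟨(oreLift_mem_image_inr hz).not.2 huR, oreCompose_adj_inr_iff.2 ⟨u, hbu, rfl⟩⟩, ?_⟩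
    rintro t ⟨ht, hbt⟩
    obtain ⟨u', hbu', rfl⟩ := oreCompose_adj_inr_iff.1 hbt
    rw [hu u' ⟨(oreLift_mem_image_inr hz).not.1 ht, hbu'⟩]
  · rw [boundary_oreCompose_image_inr hz]
    rintro f ⟨_, ⟨b, hb, rfl⟩, _, ⟨c, hc, rfl⟩, hbc⟩
    obtain ⟨ψ, hψ, havoid⟩ := hcol (f ∘ oreLift z x)
      ⟨b, hb, c, hc, by simpa [oreLift_of_ne b.2, oreLift_of_ne c.2] using hbc⟩
    refine ⟨Sum.elim (fun _ => 0) (ψ ∘ Subtype.val), ?_, ?_⟩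
    · rintro _ ⟨a, ha, rfl⟩ _ ⟨d, hd, rfl⟩ had
      exact hψ a ha d hd (oreCompose_adj_inr_inr.1 had)
    · rintro _ ⟨d, hd, rfl⟩
      simpa [oreLift_of_ne d.2] using havoid d hd
  · rw [Set.one_lt_ncard_iff]
    exact ⟨inl x, inl y, by simp, by simp, by simpa using hxy⟩

lemma collapsible_range_inl [Finite V1] (hxy : G1.Adj x y) (h1 : ¬ G1.Colorable 3)
    (hzp : G2.Adj z p) : Collapsible (oreCompose G1 G2 x y z A) (Set.range inl) := by
  refine ⟨(Set.ne_univ_iff_exists_notMem _).2 ⟨inr ⟨p, hzp.ne.symm⟩, by simp⟩, ?_,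
    fun φ hφ u hu v hv => ?_⟩
  · have := (Set.one_lt_ncard_iff (Set.finite_range (inl : V1 → V1 ⊕ {v : V2 // v ≠ z}))).2
      ⟨inl x, inl y, ⟨x, rfl⟩, ⟨y, rfl⟩, by simpa using hxy.ne⟩
    omega
  have hxy' : φ (inl x) = φ (inl y) :=
    eq_of_isProperColoring_deleteEdges h1 fun a b hab =>
      hφ _ ⟨a, rfl⟩ _ ⟨b, rfl⟩ (oreCompose_adj_inl_inl.2 hab)
  have hbd : ∀ s ∈ boundary (oreCompose G1 G2 x y z A) (Set.range inl), φ s = φ (inl x) := by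
    rintro _ ⟨⟨a, rfl⟩, (c | b), hb, hab⟩
    · exact absurd ⟨c, rfl⟩ hb
    · obtain ⟨-, rfl⟩ := oreCompose_adj_inl_inr.1 hab
      rcases oreSide_eq_or (x := x) (y := y) (A := A) b with h | h <;> rw [h]
      exact hxy'.symm
  rw [hbd u hu, hbd v hv]

lemma nontrivialCocollapsible_image_inl_compl [Finite V1] [Finite V2] (hxy : G1.Adj x y)
    (hL1 : NbhdAvoidable G1) (hzq : G2.Adj z q) (hq : oreSide x y A q = y)
    (huniq : ∀ b, G2.Adj z b → oreSide x y A b = y → b = q) :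
    NontrivialCocollapsible (oreCompose G1 G2 x y z A) (inl '' {x}ᶜ) := by
  set H := oreCompose G1 G2 x y z A
  let q' : {v : V2 // v ≠ z} := ⟨q, hzq.ne.symm⟩
  have hyq : H.Adj (inl y) (inr q') := oreCompose_adj_inl_inr.2 ⟨hzq, hq.symm⟩
  have hax : ∀ a, G1.Adj x a → a ≠ y → H.Adj (inl a) (inl x) := fun a hxa hay =>
    oreCompose_adj_inl_inl.2 (deleteEdges_adj.2 ⟨hxa.symm, by simp [hay, hxa.ne.symm]⟩)
  have hout : ∀ a t, a ≠ x → H.Adj (inl a) t → t ∉ inl '' {x}ᶜ →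
      (t = inl x ∧ G1.Adj x a ∧ a ≠ y) ∨ (a = y ∧ t = inr q') := by
    rintro a (c | b) hax hat ht
    · obtain rfl : c = x := by simpa using ht
      obtain ⟨hac, hne⟩ := deleteEdges_adj.1 (oreCompose_adj_inl_inl.1 hat)
      exact Or.inl ⟨rfl, hac.symm, by rintro rfl; exact hne (by simp [Sym2.eq_swap])⟩
    · obtain ⟨hzb, rfl⟩ := oreCompose_adj_inl_inr.1 hat
      have hb : oreSide x y A b = y := (oreSide_eq_or b.1).resolve_left hax
      exact Or.inr ⟨hb, congrArg inr (Subtype.ext (huniq b hzb hb))⟩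
  have hbd : boundary H (inl '' {x}ᶜ) = inl '' {a | G1.Adj x a} := by
    ext (a | b)
    · simp only [boundary, Set.mem_ofPred_eq, inl_injective.mem_set_image,
        Set.mem_compl_singleton_iff]
      constructor
      · rintro ⟨hax, t, ht, hat⟩
        rcases hout a t hax hat ht with ⟨-, hxa, -⟩ | ⟨rfl, -⟩
        exacts [hxa, hxy]
      · intro hxa
        refine ⟨hxa.ne.symm, ?_⟩
        by_cases hay : a = y
        · subst hay
          exact ⟨inr q', by simp, hyq⟩
        · exact ⟨inl x, by simp, hax a hxa hay⟩
    · simp [boundary]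
  refine ⟨⟨⟨inl y, y, hxy.ne.symm, rfl⟩,
    (Set.ne_univ_iff_exists_notMem _).2 ⟨inr q', by simp⟩, ?_, ?_⟩, ?_⟩
  · rw [hbd]
    rintro _ ⟨a, hxa, rfl⟩
    by_cases hay : a = y
    · subst hay
      refine ⟨inr q', ⟨by simp, hyq⟩, fun t ⟨ht, hat⟩ => ?_⟩
      rcases hout _ t hxa.ne.symm hat ht with ⟨-, -, h⟩ | ⟨-, rfl⟩
      exacts [absurd rfl h, rfl]
    · refine ⟨inl x, ⟨by simp, hax a hxa hay⟩, fun t ⟨ht, hat⟩ => ?_⟩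
      rcases hout a t hxa.ne.symm hat ht with ⟨rfl, -⟩ | ⟨h, -⟩
      exacts [rfl, absurd h hay]
  · rw [hbd]
    rintro f ⟨_, ⟨a, ha, rfl⟩, _, ⟨b, hb, rfl⟩, hab⟩
    obtain ⟨φ1, h1, havoid⟩ := hL1 x (f ∘ inl) ⟨a, b, ha, hb, hab⟩
    refine ⟨Sum.elim φ1 (fun _ => 0), ?_, ?_⟩
    · rintro _ ⟨a, ha, rfl⟩ _ ⟨b, hb, rfl⟩ hab
      exact h1 (deleteIncidenceSet_adj.2
        ⟨(deleteEdges_adj.1 (oreCompose_adj_inl_inl.1 hab)).1, ha, hb⟩)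
    · rintro _ ⟨a, ha, rfl⟩
      exact havoid a ha
  · rw [Set.one_lt_ncard_iff]
    exact ⟨inl x, inr q', by simp, by simp, by simp⟩

end OreReducible

section OreTriangle

open Sum

variable {V1 V2 : Type} {G1 : SimpleGraph V1} {G2 : SimpleGraph V2} {x y : V1} {z : V2}
  {A : Set V2} {p q : V2}

lemma oreCompose_not_adj_of_adj_inl_inl {u v : V1} {w : {v : V2 // v ≠ z}}
    (huv : (oreCompose G1 G2 x y z A).Adj (inl u) (inl v))
    (huw : (oreCompose G1 G2 x y z A).Adj (inl u) (inr w)) :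
    ¬ (oreCompose G1 G2 x y z A).Adj (inl v) (inr w) := by
  intro hvw
  obtain ⟨-, rfl⟩ := oreCompose_adj_inl_inr.1 huw
  obtain ⟨-, hv⟩ := oreCompose_adj_inl_inr.1 hvw
  exact (oreCompose_adj_inl_inl.1 huv).ne hv.symm

lemma hasReducibleSetOutside_oreCompose_of_subset_range_inl [Finite V1] [Finite V2]
    (hxy : x ≠ y) (hL2 : NbhdAvoidable G2) (hzp : G2.Adj z p)
    {T : Set (V1 ⊕ {v : V2 // v ≠ z})} (hT : T ⊆ Set.range inl) :
    HasReducibleSetOutside (oreCompose G1 G2 x y z A) T := by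
  refine ⟨_, fun t ht htT => ?_,
    Or.inr ((hL2.cocollapsible_compl_singleton hzp).nontrivial_image_inr hxy (by simp))⟩
  obtain ⟨a, rfl⟩ := hT htT
  simp at ht

lemma hasReducibleSetOutside_oreCompose_of_subset_range_inr [Finite V1] (hxy : G1.Adj x y)
    (h1 : ¬ G1.Colorable 3) (hzp : G2.Adj z p) {T : Set (V1 ⊕ {v : V2 // v ≠ z})}
    (hT : T ⊆ Set.range inr) : HasReducibleSetOutside (oreCompose G1 G2 x y z A) T := by
  refine ⟨_, fun t ht htT => ?_, Or.inl (collapsible_range_inl hxy h1 hzp)⟩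
  obtain ⟨b, rfl⟩ := hT htT
  simp at ht

lemma hasReducibleSetOutside_oreCompose_of_iso_K4 [Finite V1] (hxy : G1.Adj x y)
    (hL1 : NbhdAvoidable G1) (e : G2 ≃g completeGraph (Fin 4)) {b c : {v : V2 // v ≠ z}}
    (hzb : G2.Adj z b) (hb : oreSide x y A b = x) (hzc : G2.Adj z c)
    (hc : oreSide x y A c = x) (hbc : b ≠ c) (hzq : G2.Adj z q) (hq : oreSide x y A q = y) :
    HasReducibleSetOutside (oreCompose G1 G2 x y z A) {inl x, inr b, inr c} := by
  have : Finite V2 := Finite.of_equiv _ e.symm.toEquiv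
  have hcard : Nat.card V2 = 4 := by simp [Nat.card_congr e.toEquiv]
  have hside : ∀ {u v : V2}, oreSide x y A u = x → oreSide x y A v = y → v ≠ u := by
    rintro u v hu hv rfl
    exact hxy.ne (hu.symm.trans hv)
  have huniq : ∀ d, G2.Adj z d → oreSide x y A d = y → d = q := fun d hzd hd =>
    eq_of_ne_of_card_eq_four hcard hzb.ne hzc.ne (fun h => hbc (Subtype.ext h))
      ⟨hzd.ne.symm, hside hb hd, hside hc hd⟩ ⟨hzq.ne.symm, hside hb hq, hside hc hq⟩
  refine ⟨_, ?_, Or.inr (nontrivialCocollapsible_image_inl_compl hxy hL1 hzq hq huniq)⟩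
  rintro _ ⟨a, ha, rfl⟩
  simpa using ha

lemma hasReducibleSetOutside_oreCompose_inl_inr_inr [Finite V1] [Finite V2] (hxy : G1.Adj x y)
    (hL1 : NbhdAvoidable G1) (hzp : G2.Adj z p) (hpA : p ∈ A) (hzq : G2.Adj z q) (hqA : q ∉ A)
    (ih2 : ∀ b c, G2.Adj z b → G2.Adj z c → G2.Adj b c →
      ¬ Nonempty (G2 ≃g completeGraph (Fin 4)) → HasReducibleSetOutside G2 {z, b, c})
    ⦃a : V1⦄ ⦃b c : {v : V2 // v ≠ z}⦄
    (hab : (oreCompose G1 G2 x y z A).Adj (inl a) (inr b))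
    (hac : (oreCompose G1 G2 x y z A).Adj (inl a) (inr c))
    (hbc : (oreCompose G1 G2 x y z A).Adj (inr b) (inr c)) :
    HasReducibleSetOutside (oreCompose G1 G2 x y z A) {inl a, inr b, inr c} := by
  obtain ⟨hzb, rfl⟩ := oreCompose_adj_inl_inr.1 hab
  obtain ⟨hzc, hcb⟩ := oreCompose_adj_inl_inr.1 hac
  replace hbc := oreCompose_adj_inr_inr.1 hbc
  by_cases hK : Nonempty (G2 ≃g completeGraph (Fin 4))
  · obtain ⟨e⟩ := hK
    have hbc' : b ≠ c := fun h => hbc.ne (congrArg Subtype.val h)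
    rcases oreSide_eq_or (x := x) (y := y) (A := A) b with hb | hb <;> rw [hb] at hcb ⊢
    · exact hasReducibleSetOutside_oreCompose_of_iso_K4 hxy hL1 e hzb hb hzc hcb.symm hbc' hzq
        (oreSide_of_notMem hqA)
    · rw [← oreSide_compl] at hb hcb
      rw [oreCompose_comm]
      exact hasReducibleSetOutside_oreCompose_of_iso_K4 hxy.symm hL1 e hzb hb hzc hcb.symm hbc'
        hzp (by rw [oreSide_compl, oreSide_of_mem hpA])
  · obtain ⟨R, hR, hred⟩ := ih2 b c hzb hzc hbc hK
    have hz : z ∉ R := fun h => hR h (by simp)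
    refine ⟨_, ?_, hred.imp (Collapsible.image_inr hz)
      fun h => h.1.nontrivial_image_inr hxy.ne hz⟩
    rintro _ ⟨d, hd, rfl⟩
    have := hR hd
    simp_all [Subtype.ext_iff]

lemma hasReducibleSetOutside_oreCompose [Finite V1] [Finite V2] (hxy : G1.Adj x y)
    (h1 : ¬ G1.Colorable 3) (hL1 : NbhdAvoidable G1) (hL2 : NbhdAvoidable G2)
    (hzp : G2.Adj z p) (hpA : p ∈ A) (hzq : G2.Adj z q) (hqA : q ∉ A)
    (ih2 : ∀ b c, G2.Adj z b → G2.Adj z c → G2.Adj b c →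
      ¬ Nonempty (G2 ≃g completeGraph (Fin 4)) → HasReducibleSetOutside G2 {z, b, c})
    {t1 t2 t3 : V1 ⊕ {v : V2 // v ≠ z}} (h12 : (oreCompose G1 G2 x y z A).Adj t1 t2)
    (h13 : (oreCompose G1 G2 x y z A).Adj t1 t3) (h23 : (oreCompose G1 G2 x y z A).Adj t2 t3) :
    HasReducibleSetOutside (oreCompose G1 G2 x y z A) {t1, t2, t3} := by
  have mixed := hasReducibleSetOutside_oreCompose_inl_inr_inr hxy hL1 hzp hpA hzq hqA ih2
  rcases t1 with a1 | b1 <;> rcases t2 with a2 | b2 <;> rcases t3 with a3 | b3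
  · exact hasReducibleSetOutside_oreCompose_of_subset_range_inl hxy.ne hL2 hzp
      (by simp [Set.insert_subset_iff])
  · exact absurd h23 (oreCompose_not_adj_of_adj_inl_inl h12 h13)
  · exact absurd h23.symm (oreCompose_not_adj_of_adj_inl_inl h13 h12)
  · exact mixed h12 h13 h23
  · exact absurd h13.symm (oreCompose_not_adj_of_adj_inl_inl h23 h12.symm)
  · rw [Set.insert_comm]
    exact mixed h12.symm h23 h13
  · rw [Set.pair_comm, Set.insert_comm]
    exact mixed h13.symm h23.symm h12
  · exact hasReducibleSetOutside_oreCompose_of_subset_range_inr hxy h1 hzp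
      (by simp [Set.insert_subset_iff])

end OreTriangle

theorem IsFourOre.hasReducibleSetOutside_triangle {V : Type} {G : SimpleGraph V}
    (h : IsFourOre G) (hK4 : ¬ Nonempty (G ≃g completeGraph (Fin 4))) {t1 t2 t3 : V}
    (h12 : G.Adj t1 t2) (h13 : G.Adj t1 t3) (h23 : G.Adj t2 t3) :
    HasReducibleSetOutside G {t1, t2, t3} := by
  induction h with
  | k4 G hiso => exact absurd hiso hK4
  | comp G G1 G2 h1 h2 hcomp _ ih2 =>
    obtain ⟨x, y, z, A, hxy, ⟨p, hzp, hpA⟩, ⟨q, hzq, hqA⟩, ⟨e⟩⟩ := hcomp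
    have := h1.finite
    have := h2.finite
    obtain ⟨hN1, -, hL1⟩ := h1.colorInvariants
    obtain ⟨-, -, hL2⟩ := h2.colorInvariants
    refine (HasReducibleSetOutside.preimage e (hasReducibleSetOutside_oreCompose hxy hN1 hL1 hL2
      hzp hpA hzq hqA (fun b c hzb hzc hbc hK => ih2 hK hzb hzc hbc) (e.map_adj_iff.2 h12)
      (e.map_adj_iff.2 h13) (e.map_adj_iff.2 h23))).mono ?_
    simp [Set.insert_subset_iff]

theorem statement_15_general {V : Type} (G : SimpleGraph V)
    (hOre : IsFourOre G) (hK4 : ¬ Nonempty (G ≃g completeGraph (Fin 4)))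
    (t1 t2 t3 : V) (h12 : G.Adj t1 t2) (h13 : G.Adj t1 t3) (h23 : G.Adj t2 t3) :
    ∃ R : Set V, R ⊆ (({t1, t2, t3} : Set V)ᶜ : Set V) ∧
      (Collapsible G R ∨ NontrivialCocollapsible G R) :=
  hOre.hasReducibleSetOutside_triangle hK4 h12 h13 h23

/-- Let `G` be a `4`-Ore graph not isomorphic to `K4`. Then for
every triangle `T` of `G`, the set `V(G) ∖ V(T)` contains either a collapsible
subset of `G` or a nontrivial cocollapsible subset of `G`. -/
theorem statement_15 {V : Type} [Fintype V] (G : SimpleGraph V)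
    (hOre : IsFourOre G) (hK4 : ¬ Nonempty (G ≃g completeGraph (Fin 4)))
    (t1 t2 t3 : V) (h12 : G.Adj t1 t2) (h13 : G.Adj t1 t3) (h23 : G.Adj t2 t3) :
    ∃ R : Set V, R ⊆ (({t1, t2, t3} : Set V)ᶜ : Set V) ∧
      (Collapsible G R ∨ NontrivialCocollapsible G R) :=
  statement_15_general G hOre hK4 t1 t2 t3 h12 h13 h23
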